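/- Let V be a finite set of boxes with size function w : V → [0,1]^2 and let p, q ∈ (0,1/2]. Define I_1(p,q) = {b ∈ V : w_1(b) > 1−p and w_2(b) > 1−q}, I_2(p,q) = {b ∈ V \ I_1(p,q) : w_1(b) > 1/2 and w_2(b) > 1/2}, I_3(p,q) = {b ∈ V : p ≤ w_1(b) ≤ 1/2 and q ≤ w_2(b) ≤ 1/2}, and for b ∈ V set m(b,p,q) = ⌊1/p⌋·⌊(1−w_2(b))/q⌋ + ⌊1/q⌋·⌊(1−w_1(b))/p⌋ − ⌊(1−w_1(b))/p⌋·⌊(1−w_2(b))/q⌋. Further define L^(p,q)(V,w) = |I_1(p,q) ∪ I_2(p,q)| + ⌈(|I_3(p,q)| − ∑_{b∈I_2(p,q)} m(b,p,q)) / (⌊1/p⌋·⌊1/q⌋)⌉. Then, with w'^(p,q)(b) = (φ^(p)(w_1(b)), φ^(q)(w_2(b))), one has L^(p,q)(V,w) = ⌈∑_{b ∈ I_1(p,q) ∪ I_2(p,q) ∪ I_3(p,q)} φ^(p)(w_1(b))·φ^(q)(w_2(b))⌉. -/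

import Mathlib

/-!
Every box of `I₁` gets conservative size `1 × 1`, every box of `I₃` gets `1/⌊1/p⌋ × 1/⌊1/q⌋`, and
a box of `I₂` gets `(1 - a/⌊1/p⌋) × (1 - b/⌊1/q⌋)` with `a = ⌊(1-w₁)/p⌋`, `b = ⌊(1-w₂)/q⌋`, whose
area is `1 - m(b,p,q)/(⌊1/p⌋⌊1/q⌋)`. Summing, the total area is the natural number `|I₁ ∪ I₂|`
plus the fraction inside the ceiling of `L^(p,q)`, and an integer passes through the ceiling.
-/

/-- The dual feasible function `φ^(ε)`: `φ^(ε)(x) = 1 - ⌊(1-x)/ε⌋/⌊1/ε⌋` for `x > 1/2`,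
`φ^(ε)(x) = 1/⌊1/ε⌋` for `ε ≤ x ≤ 1/2`, and `φ^(ε)(x) = 0` for `x < ε`. -/
noncomputable def phi (ε x : ℝ) : ℝ :=
  if 1 / 2 < x then 1 - (⌊(1 - x) / ε⌋ : ℝ) / (⌊1 / ε⌋ : ℝ)
  else if ε ≤ x then 1 / (⌊1 / ε⌋ : ℝ)
  else 0

open Finset

lemma floor_one_div_pos {ε : ℝ} (hε : ε ∈ Set.Ioc 0 1) : 0 < ⌊1 / ε⌋ :=
  Int.floor_pos.mpr ((one_le_div hε.1).mpr hε.2)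

lemma phi_of_half_lt {ε x : ℝ} (hx : 1 / 2 < x) :
    phi ε x = 1 - (⌊(1 - x) / ε⌋ : ℝ) / (⌊1 / ε⌋ : ℝ) :=
  if_pos hx

lemma phi_of_mem_Icc {ε x : ℝ} (hx : x ∈ Set.Icc ε (1 / 2)) : phi ε x = 1 / (⌊1 / ε⌋ : ℝ) := by
  rw [phi, if_neg hx.2.not_gt, if_pos hx.1]

lemma phi_eq_one {ε x : ℝ} (hε : ε ∈ Set.Ioc 0 (1 / 2)) (hx : x ∈ Set.Ioc (1 - ε) 1) :
    phi ε x = 1 := by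
  have hfloor : ⌊(1 - x) / ε⌋ = 0 := by
    rw [Int.floor_eq_zero_iff]
    exact ⟨div_nonneg (by linarith [hx.2]) hε.1.le, (div_lt_one hε.1).mpr (by linarith [hx.1])⟩
  rw [phi_of_half_lt (by linarith [hx.1, hε.2]), hfloor]
  simp

lemma phi_mul_phi_of_half_lt {p q x y : ℝ} (hp : p ∈ Set.Ioc 0 1) (hq : q ∈ Set.Ioc 0 1)
    (hx : 1 / 2 < x) (hy : 1 / 2 < y) :
    phi p x * phi q y =
      1 - ((⌊1 / p⌋ * ⌊(1 - y) / q⌋ + ⌊1 / q⌋ * ⌊(1 - x) / p⌋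
          - ⌊(1 - x) / p⌋ * ⌊(1 - y) / q⌋ : ℤ) : ℝ) / ((⌊1 / p⌋ : ℝ) * (⌊1 / q⌋ : ℝ)) := by
  have hP : (⌊1 / p⌋ : ℝ) ≠ 0 := by exact_mod_cast (floor_one_div_pos hp).ne'
  have hQ : (⌊1 / q⌋ : ℝ) ≠ 0 := by exact_mod_cast (floor_one_div_pos hq).ne'
  rw [phi_of_half_lt hx, phi_of_half_lt hy]
  push_cast
  field_simp
  ring

lemma phi_mul_phi_of_mem_Icc {p q x y : ℝ} (hx : x ∈ Set.Icc p (1 / 2))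
    (hy : y ∈ Set.Icc q (1 / 2)) :
    phi p x * phi q y = 1 / ((⌊1 / p⌋ : ℝ) * (⌊1 / q⌋ : ℝ)) := by
  rw [phi_of_mem_Icc hx, phi_of_mem_Icc hy, div_mul_div_comm, one_mul]

/-- The Martello–Vigo two-dimensional bound `L^(p,q)` equals the ceiling of the total
volume of the boxes in `I₁ ∪ I₂ ∪ I₃` with respect to the conservative scale
`w'^(p,q) = (φ^(p) ∘ w₁, φ^(q) ∘ w₂)`. -/
theorem martelloVigo_bound_eq {V : Type*} [Fintype V] [DecidableEq V]
    (w₁ w₂ : V → ℝ)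
    (hw₁ : ∀ b, w₁ b ∈ Set.Icc (0 : ℝ) 1) (hw₂ : ∀ b, w₂ b ∈ Set.Icc (0 : ℝ) 1)
    (p q : ℝ) (hp : p ∈ Set.Ioc (0 : ℝ) (1 / 2)) (hq : q ∈ Set.Ioc (0 : ℝ) (1 / 2))
    (I₁ I₂ I₃ : Finset V)
    (hI₁ : ∀ b, b ∈ I₁ ↔ 1 - p < w₁ b ∧ 1 - q < w₂ b)
    (hI₂ : ∀ b, b ∈ I₂ ↔ b ∉ I₁ ∧ 1 / 2 < w₁ b ∧ 1 / 2 < w₂ b)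
    (hI₃ : ∀ b, b ∈ I₃ ↔ p ≤ w₁ b ∧ w₁ b ≤ 1 / 2 ∧ q ≤ w₂ b ∧ w₂ b ≤ 1 / 2) :
    ((I₁ ∪ I₂).card : ℤ) +
      ⌈((I₃.card : ℝ) -
          ∑ b ∈ I₂, ((⌊1 / p⌋ * ⌊(1 - w₂ b) / q⌋ + ⌊1 / q⌋ * ⌊(1 - w₁ b) / p⌋
            - ⌊(1 - w₁ b) / p⌋ * ⌊(1 - w₂ b) / q⌋ : ℤ) : ℝ)) /
        ((⌊1 / p⌋ : ℝ) * (⌊1 / q⌋ : ℝ))⌉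
    = ⌈∑ b ∈ I₁ ∪ I₂ ∪ I₃, phi p (w₁ b) * phi q (w₂ b)⌉ := by
  have hp1 : p ∈ Set.Ioc 0 1 := ⟨hp.1, by linarith [hp.2]⟩
  have hq1 : q ∈ Set.Ioc 0 1 := ⟨hq.1, by linarith [hq.2]⟩
  have hd12 : Disjoint I₁ I₂ := disjoint_right.mpr fun b hb => ((hI₂ b).mp hb).1
  have hd3 : Disjoint (I₁ ∪ I₂) I₃ := by
    refine disjoint_left.mpr fun b hb hb3 => ?_
    obtain ⟨-, h1, -, -⟩ := (hI₃ b).mp hb3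
    rcases mem_union.mp hb with h | h
    · linarith [((hI₁ b).mp h).1, hp.2]
    · linarith [((hI₂ b).mp h).2.1]
  have e1 : ∀ b ∈ I₁, phi p (w₁ b) * phi q (w₂ b) = 1 := fun b hb => by
    obtain ⟨h1, h2⟩ := (hI₁ b).mp hb
    rw [phi_eq_one hp ⟨h1, (hw₁ b).2⟩, phi_eq_one hq ⟨h2, (hw₂ b).2⟩, mul_one]
  have e2 := fun b hb =>
    phi_mul_phi_of_half_lt hp1 hq1 ((hI₂ b).mp hb).2.1 ((hI₂ b).mp hb).2.2
  have e3 := fun b hb => by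
    obtain ⟨h1, h2, h3, h4⟩ := (hI₃ b).mp hb
    exact phi_mul_phi_of_mem_Icc ⟨h1, h2⟩ ⟨h3, h4⟩
  rw [sum_union hd3, sum_union hd12, sum_congr rfl e1, sum_congr rfl e2, sum_congr rfl e3,
    card_union_of_disjoint hd12]
  simp only [sum_const, nsmul_eq_mul, mul_one, sum_sub_distrib, ← sum_div]
  rw [add_comm, ← Int.ceil_add_natCast]
  congr 1
  push_cast
  ring
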